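/- Let T be a finite TD-unmixed balanced tree of height 3. Then there exists a vertex u of height 2 with deg_T(u) = 2. -/

import Mathlib

open scoped Classical

section GraphDefs

variable {V : Type} (G : SimpleGraph V)

/-- A leaf is a vertex of degree 1. -/
def IsLeafVx (v : V) : Prop := (G.neighborSet v).ncard = 1

/-- The height of a vertex: the minimum distance to a leaf in its connected
component (`0` if there is no leaf reachable from it, e.g. for isolated vertices). -/
noncomputable def heightVx (v : V) : ℕ :=
  sInf {n | ∃ l, IsLeafVx G l ∧ G.Reachable v l ∧ G.dist v l = n}

/-- The height of a graph: the maximum height of a vertex. -/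
noncomputable def heightGr : ℕ := sSup (Set.range (heightVx G))

/-- A graph is balanced if no two adjacent vertices have the same height. -/
def IsBalanced : Prop := ∀ u w, G.Adj u w → heightVx G u ≠ heightVx G w

/-- The open neighborhood of a set of vertices. -/
def nbhd (S : Set V) : Set V := {u | ∃ v ∈ S, G.Adj v u}

/-- A total dominating set: `N(S) = V`. -/
def IsTDSet (S : Set V) : Prop := nbhd G S = Set.univ

/-- A minimal total dominating set. -/
def IsMinTDSet (S : Set V) : Prop := IsTDSet G S ∧ ∀ S' ⊂ S, ¬ IsTDSet G S'

/-- A graph is TD-unmixed if all of its minimal total dominating sets have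
the same cardinality. -/
def TDUnmixed : Prop :=
  ∀ S₁ S₂ : Set V, IsMinTDSet G S₁ → IsMinTDSet G S₂ → S₁.ncard = S₂.ncard

/-- A forest is TD-unmixed if every connected component is TD-unmixed. -/
def ComponentwiseTDUnmixed : Prop :=
  ∀ c : G.ConnectedComponent, TDUnmixed (G.induce c.supp)

end GraphDefs

/-!
Along the edges of a balanced tree the height changes by exactly one. Suppose no vertex of
height 2 has degree 2. The vertices of height at least 2 span a forest, so one of them has at
most one neighbour of height at least 2; as it has degree at least 3, it is a vertex `b` of
height 2 with two neighbours `a₁ ≠ a₂` of height 1. The vertices of height at most 1, together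
with the height-2 vertices not adjacent to `a₁` or `a₂`, form a total dominating set: acyclicity
forbids both of the (at least two) neighbours of a height-3 vertex to be adjacent to `a₁` or
`a₂`. In a minimal total dominating set inside it, `a₁` and `a₂` are dominated by leaves only,
and swapping these two leaves for `b` leaves a smaller total dominating set.
-/

open SimpleGraph

section Tree

variable {V : Type} {G : SimpleGraph V}

theorem SimpleGraph.IsTree.eq_of_adj_of_dist_add_one (hG : G.IsTree) {r v u₁ u₂ : V}
    (h₁ : G.Adj u₁ v) (h₂ : G.Adj u₂ v) (hd₁ : G.dist r u₁ + 1 = G.dist r v)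
    (hd₂ : G.dist r u₂ + 1 = G.dist r v) : u₁ = u₂ := by
  have extend {u : V} (h : G.Adj u v) (hd : G.dist r u + 1 = G.dist r v) :
      ∃ p : G.Walk r u, (p.concat h).IsPath := by
    obtain ⟨p, hp, hlen⟩ := hG.connected.exists_path_of_dist r u
    refine ⟨p, hp.concat (fun hv => ?_) h⟩
    have := dist_le (p.takeUntil v hv)
    have := p.length_takeUntil_le_length hv
    omega
  obtain ⟨p₁, hp₁⟩ := extend h₁ hd₁
  obtain ⟨p₂, hp₂⟩ := extend h₂ hd₂
  have heq :=
    congrArg Subtype.val ((hG.isAcyclic.subsingleton_path r v).elim ⟨_, hp₁⟩ ⟨_, hp₂⟩)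
  exact (Walk.concat_inj heq).1

theorem SimpleGraph.IsTree.exists_mem_subsingleton_neighborSet_inter (hG : G.IsTree)
    {D : Set V} (hfin : D.Finite) (hne : D.Nonempty) :
    ∃ v ∈ D, (G.neighborSet v ∩ D).Subsingleton := by
  obtain ⟨r, hr⟩ := hne
  obtain ⟨v, hv, hmax⟩ := Set.exists_max_image D (G.dist r) hfin ⟨r, hr⟩
  have closer {u : V} (hu : u ∈ G.neighborSet v ∩ D) : G.dist r u + 1 = G.dist r v := by
    have := hmax u hu.2
    have := hG.dist_eq_dist_add_one_of_adj r hu.1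
    omega
  exact ⟨v, hv, fun u₁ hu₁ u₂ hu₂ =>
    hG.eq_of_adj_of_dist_add_one hu₁.1.symm hu₂.1.symm (closer hu₁) (closer hu₂)⟩

theorem SimpleGraph.IsTree.subsingleton_neighborSet_inter_nbhd (hG : G.IsTree) {A : Set V}
    {b c : V} (hA : A ⊆ G.neighborSet b) (hc : c ∉ A) :
    (G.neighborSet c ∩ nbhd G A).Subsingleton := by
  rintro z ⟨hcz, x, hx, hxz⟩ z' ⟨hcz', x', hx', hx'z'⟩
  have hdist_one {w : V} (h : G.Adj c w) : G.dist c w = 1 := dist_eq_one_iff_adj.mpr h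
  have hdist_two {w y : V} (hcw : G.Adj c w) (hwy : G.Adj w y) (hy : y ∈ A) :
      G.dist c y = 2 := by
    have h0 : G.dist c y ≠ 0 := fun h =>
      hc (hG.connected.dist_eq_zero_iff.mp h ▸ hy)
    have := hdist_one hcw
    have := hG.dist_eq_dist_add_one_of_adj c hwy
    omega
  have hz := hdist_two hcz hxz.symm hx
  have hz' := hdist_two hcz' hx'z'.symm hx'
  have := hdist_one hcz
  have := hdist_one hcz'
  rcases hG.dist_eq_dist_add_one_of_adj c (hA hx) with hb | hb
  · -- `b` lies beyond `x` and `x'`, so they are both its parent (towards `c`)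
    obtain rfl : x = x' :=
      hG.eq_of_adj_of_dist_add_one (r := c) (hA hx).symm (hA hx').symm (by omega) (by omega)
    exact hG.eq_of_adj_of_dist_add_one (r := c) hxz.symm hx'z'.symm (by omega) (by omega)
  · -- `b` is the parent of both `x` and `x'`, and so are `z` and `z'`
    rw [hG.eq_of_adj_of_dist_add_one (r := c) hxz.symm (hA hx) (by omega) (by omega),
      hG.eq_of_adj_of_dist_add_one (r := c) hx'z'.symm (hA hx') (by omega) (by omega)]

end Tree

section Height

variable {V : Type} {G : SimpleGraph V}

theorem IsLeafVx.eq_of_adj {l a x : V} (hl : IsLeafVx G l) (ha : G.Adj l a) (hx : G.Adj l x) :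
    x = a := by
  obtain ⟨c, hc⟩ := Set.ncard_eq_one.mp hl
  have ha' : a ∈ G.neighborSet l := ha
  have hx' : x ∈ G.neighborSet l := hx
  rw [hc] at ha' hx'
  exact hx'.trans ha'.symm

theorem heightVx_le_dist {v l : V} (hl : IsLeafVx G l) (hr : G.Reachable v l) :
    heightVx G v ≤ G.dist v l :=
  Nat.sInf_le ⟨l, hl, hr, rfl⟩

theorem exists_isLeafVx_of_heightVx_ne_zero {v : V} (hv : heightVx G v ≠ 0) :
    ∃ l, IsLeafVx G l := by
  by_contra! h
  exact hv (by simp [heightVx, h])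

theorem heightVx_le_heightGr [Finite V] (v : V) : heightVx G v ≤ heightGr G :=
  le_csSup (Set.finite_range _).bddAbove ⟨v, rfl⟩

theorem exists_heightVx_eq_heightGr [Finite V] (hG : heightGr G ≠ 0) :
    ∃ v, heightVx G v = heightGr G := by
  have hne : (Set.range (heightVx G)).Nonempty := by
    by_contra h
    exact hG (by rw [heightGr, Set.not_nonempty_iff_eq_empty.mp h, csSup_empty]; rfl)
  exact Nat.sSup_mem hne (Set.finite_range _).bddAbove

theorem exists_isLeafVx_dist_eq_heightVx (hconn : G.Connected) (hleaf : ∃ l, IsLeafVx G l)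
    (v : V) : ∃ l, IsLeafVx G l ∧ G.dist v l = heightVx G v := by
  obtain ⟨l, hl⟩ := hleaf
  obtain ⟨l', hl', -, hd⟩ :=
    Nat.sInf_mem (s := {n | ∃ l, IsLeafVx G l ∧ G.Reachable v l ∧ G.dist v l = n})
      ⟨_, l, hl, hconn v l, rfl⟩
  exact ⟨l', hl', hd⟩

theorem heightVx_eq_zero_iff (hconn : G.Connected) (hleaf : ∃ l, IsLeafVx G l) {v : V} :
    heightVx G v = 0 ↔ IsLeafVx G v := by
  refine ⟨fun h => ?_, fun h => by simpa using heightVx_le_dist h (Reachable.refl v)⟩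
  obtain ⟨l, hl, hd⟩ := exists_isLeafVx_dist_eq_heightVx hconn hleaf v
  rwa [hconn.dist_eq_zero_iff.mp (hd.trans h)]

theorem heightVx_le_heightVx_add_one (hconn : G.Connected) (hleaf : ∃ l, IsLeafVx G l)
    {u w : V} (h : G.Adj u w) : heightVx G u ≤ heightVx G w + 1 := by
  obtain ⟨l, hl, hd⟩ := exists_isLeafVx_dist_eq_heightVx hconn hleaf w
  calc heightVx G u ≤ G.dist u l := heightVx_le_dist hl (hconn u l)
    _ ≤ G.dist u w + G.dist w l := hconn.dist_triangle
    _ = heightVx G w + 1 := by rw [dist_eq_one_iff_adj.mpr h, hd, add_comm]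

theorem exists_adj_heightVx_eq (hconn : G.Connected) (hleaf : ∃ l, IsLeafVx G l) {v : V}
    {k : ℕ} (hv : heightVx G v = k + 1) : ∃ u, G.Adj v u ∧ heightVx G u = k := by
  obtain ⟨l, hl, hd⟩ := exists_isLeafVx_dist_eq_heightVx hconn hleaf v
  obtain ⟨p, -, hp⟩ := hconn.exists_path_of_dist v l
  cases p with
  | nil => simp_all
  | cons hadj q =>
    refine ⟨_, hadj, le_antisymm ?_ ?_⟩
    · calc heightVx G _ ≤ G.dist _ l := heightVx_le_dist hl (hconn _ l)
        _ ≤ q.length := dist_le q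
        _ = k := by simp only [Walk.length_cons] at hp; omega
    · have := heightVx_le_heightVx_add_one hconn hleaf hadj
      omega

theorem one_lt_ncard_neighborSet [Finite V] (hconn : G.Connected) (hleaf : ∃ l, IsLeafVx G l)
    {v : V} (hv : heightVx G v ≠ 0) : 1 < (G.neighborSet v).ncard := by
  obtain ⟨u, hu, -⟩ :=
    exists_adj_heightVx_eq hconn hleaf (v := v) (k := heightVx G v - 1) (by omega)
  have hpos : 0 < (G.neighborSet v).ncard := (Set.ncard_pos (Set.toFinite _)).mpr ⟨u, hu⟩
  have hne : (G.neighborSet v).ncard ≠ 1 :=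
    fun h => hv ((heightVx_eq_zero_iff hconn hleaf).mpr h)
  omega

theorem IsBalanced.heightVx_eq_add_one_or (hbal : IsBalanced G) (hconn : G.Connected)
    (hleaf : ∃ l, IsLeafVx G l) {u w : V} (h : G.Adj u w) :
    heightVx G u = heightVx G w + 1 ∨ heightVx G w = heightVx G u + 1 := by
  have := heightVx_le_heightVx_add_one hconn hleaf h
  have := heightVx_le_heightVx_add_one hconn hleaf h.symm
  have := hbal u w h
  omega

end Height

section TotalDomination

variable {V : Type} {G : SimpleGraph V}

theorem isTDSet_iff {S : Set V} : IsTDSet G S ↔ ∀ v, ∃ s ∈ S, G.Adj s v :=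
  Set.eq_univ_iff_forall

theorem IsTDSet.exists_isMinTDSet_subset [Finite V] {S : Set V} (hS : IsTDSet G S) :
    ∃ M ⊆ S, IsMinTDSet G M := by
  obtain ⟨M, hMS, hM⟩ := exists_minimal_le_of_wellFoundedLT (IsTDSet G) S hS
  exact ⟨M, hMS, hM.prop, fun S' hS' hTD => hS'.2 (hM.2 hTD hS'.1)⟩

/-- Replacing the private leaves `l₁, l₂` of `a₁, a₂` by their common neighbour `b` yields a
smaller total dominating set. -/
theorem not_tdUnmixed_of_leaf_swap [Finite V] {S : Set V} {a₁ a₂ b : V} (hS : IsTDSet G S)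
    (hbS : b ∉ S) (ha : a₁ ≠ a₂) (hb₁ : G.Adj b a₁) (hb₂ : G.Adj b a₂)
    (hleaf : ∀ s ∈ S, G.Adj s a₁ ∨ G.Adj s a₂ → IsLeafVx G s) : ¬ TDUnmixed G := by
  intro hunm
  obtain ⟨M, hMS, hM⟩ := hS.exists_isMinTDSet_subset
  obtain ⟨l₁, hl₁M, hl₁⟩ := isTDSet_iff.mp hM.1 a₁
  obtain ⟨l₂, hl₂M, hl₂⟩ := isTDSet_iff.mp hM.1 a₂
  have hleaf₁ := hleaf l₁ (hMS hl₁M) (.inl hl₁)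
  have hleaf₂ := hleaf l₂ (hMS hl₂M) (.inr hl₂)
  have hl : l₁ ≠ l₂ := by
    rintro rfl
    exact ha (hleaf₁.eq_of_adj hl₁ hl₂).symm
  set M' := insert b (M \ {l₁, l₂})
  have hM' : IsTDSet G M' := by
    rw [isTDSet_iff]
    intro x
    obtain ⟨s, hsM, hsx⟩ := isTDSet_iff.mp hM.1 x
    by_cases h₁ : s = l₁
    · subst h₁
      exact ⟨b, Set.mem_insert _ _, hleaf₁.eq_of_adj hl₁ hsx ▸ hb₁⟩
    by_cases h₂ : s = l₂
    · subst h₂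
      exact ⟨b, Set.mem_insert _ _, hleaf₂.eq_of_adj hl₂ hsx ▸ hb₂⟩
    exact ⟨s, Set.mem_insert_of_mem _ ⟨hsM, by simp [h₁, h₂]⟩, hsx⟩
  have hpair : ({l₁, l₂} : Set V) ⊆ M :=
    Set.insert_subset hl₁M (Set.singleton_subset_iff.mpr hl₂M)
  have hcard : M'.ncard + 1 = M.ncard := by
    have := Set.ncard_le_ncard hpair
    rw [Set.ncard_pair hl] at this
    rw [Set.ncard_insert_of_notMem (fun h => hbS (hMS h.1)), Set.ncard_sdiff hpair,
      Set.ncard_pair hl]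
    omega
  obtain ⟨N, hNM', hN⟩ := hM'.exists_isMinTDSet_subset
  have := Set.ncard_le_ncard hNM'
  have := hunm M N hM hN
  omega

end TotalDomination

section HeightThree

variable {V : Type} {G : SimpleGraph V}

theorem exists_heightVx_two_adj_two_heightVx_one [Finite V] (htree : G.IsTree)
    (hbal : IsBalanced G) (hleaf : ∃ l, IsLeafVx G l) (hle : ∀ v, heightVx G v ≤ 3) {c : V}
    (hc : heightVx G c = 3) (hdeg : ∀ u, heightVx G u = 2 → (G.neighborSet u).ncard ≠ 2) :
    ∃ b a₁ a₂, heightVx G b = 2 ∧ a₁ ≠ a₂ ∧ G.Adj b a₁ ∧ G.Adj b a₂ ∧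
      heightVx G a₁ = 1 ∧ heightVx G a₂ = 1 := by
  set D := {v | 2 ≤ heightVx G v}
  set H₁ := {v | heightVx G v = 1}
  have hadj {u w : V} (h : G.Adj u w) := hbal.heightVx_eq_add_one_or htree.connected hleaf h
  -- the vertices of height at least 2 span a forest, which has a vertex of degree at most one
  obtain ⟨b, hbD, hb⟩ := htree.exists_mem_subsingleton_neighborSet_inter (Set.toFinite D)
    ⟨c, by simp [D, hc]⟩
  have hb₂ : 2 ≤ heightVx G b := hbD
  have hcard : (G.neighborSet b).ncard ≤ 1 + (G.neighborSet b ∩ H₁).ncard := by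
    have hsub : G.neighborSet b ⊆ (G.neighborSet b ∩ D) ∪ (G.neighborSet b ∩ H₁) := by
      intro a ha
      rcases hadj ha with h | h <;> simp [D, H₁, ha] <;> omega
    calc (G.neighborSet b).ncard
        ≤ (G.neighborSet b ∩ D ∪ G.neighborSet b ∩ H₁).ncard := Set.ncard_le_ncard hsub
      _ ≤ _ :=
        (Set.ncard_union_le _ _).trans (by grw [Set.ncard_le_one_iff_subsingleton.mpr hb])
  have hdeg' := one_lt_ncard_neighborSet htree.connected hleaf (v := b) (by omega)
  have hb2 : heightVx G b = 2 := by
    by_contra hb2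
    have hempty : G.neighborSet b ∩ H₁ = ∅ := by
      ext a
      simp only [Set.mem_inter_iff, mem_neighborSet, Set.mem_ofPred_eq, H₁,
        Set.mem_empty_iff_false, iff_false, not_and]
      intro ha h1
      have := hadj ha
      have := hle b
      omega
    rw [hempty, Set.ncard_empty] at hcard
    omega
  obtain ⟨a₁, ha₁, a₂, ha₂, hne⟩ :=
    (Set.one_lt_ncard (s := G.neighborSet b ∩ H₁)).mp (by have := hdeg b hb2; omega)
  exact ⟨b, a₁, a₂, hb2, hne, ha₁.1, ha₂.1, ha₁.2, ha₂.2⟩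

theorem isTDSet_heightVx_le_one_or_two_notMem_nbhd [Finite V] (htree : G.IsTree)
    (hbal : IsBalanced G) (hleaf : ∃ l, IsLeafVx G l) (hle : ∀ v, heightVx G v ≤ 3)
    {A : Set V} {b : V} (hA : A ⊆ G.neighborSet b) (hA₁ : ∀ a ∈ A, heightVx G a = 1) :
    IsTDSet G {v | heightVx G v ≤ 1 ∨ (heightVx G v = 2 ∧ v ∉ nbhd G A)} := by
  have hconn := htree.connected
  have hadj {u w : V} (h : G.Adj u w) := hbal.heightVx_eq_add_one_or hconn hleaf h
  rw [isTDSet_iff]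
  intro x
  obtain h3 | h3 := eq_or_ne (heightVx G x) 3
  · obtain ⟨z, hxz, hz⟩ : ∃ z ∈ G.neighborSet x, z ∉ nbhd G A := by
      by_contra! h
      obtain ⟨z, hz, z', hz', hne⟩ := (Set.one_lt_ncard (Set.toFinite _)).mp
        (one_lt_ncard_neighborSet hconn hleaf (v := x) (by omega))
      refine hne (htree.subsingleton_neighborSet_inter_nbhd hA (fun hx => ?_)
        ⟨hz, h z hz⟩ ⟨hz', h z' hz'⟩)
      have := hA₁ x hx
      omega
    refine ⟨z, Or.inr ⟨?_, hz⟩, hxz.symm⟩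
    have := hadj hxz
    have := hle z
    omega
  obtain h0 | h0 := eq_or_ne (heightVx G x) 0
  · obtain ⟨u, hu⟩ := Set.ncard_eq_one.mp ((heightVx_eq_zero_iff hconn hleaf).mp h0)
    have hxu : G.Adj x u := (Set.ext_iff.mp hu u).mpr rfl
    refine ⟨u, Or.inl ?_, hxu.symm⟩
    have := hadj hxu
    omega
  · obtain ⟨u, hxu, hu⟩ :=
      exists_adj_heightVx_eq hconn hleaf (v := x) (k := heightVx G x - 1) (by omega)
    refine ⟨u, Or.inl ?_, hxu.symm⟩
    have := hle x
    omega

end HeightThree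

/-- **Theorem**: a finite TD-unmixed balanced tree of height 3 has a vertex of
height 2 and degree 2. -/
theorem exists_height_two_degree_two {V : Type} [Fintype V] (G : SimpleGraph V)
    (htree : G.IsTree) (hbal : IsBalanced G) (hunm : TDUnmixed G)
    (hht : heightGr G = 3) :
    ∃ u : V, heightVx G u = 2 ∧ (G.neighborSet u).ncard = 2 := by
  by_contra! hdeg
  obtain ⟨c, hc⟩ := exists_heightVx_eq_heightGr (G := G) (by omega)
  rw [hht] at hc
  have hleaf := exists_isLeafVx_of_heightVx_ne_zero (G := G) (v := c) (by omega)
  have hle (v : V) : heightVx G v ≤ 3 := hht ▸ heightVx_le_heightGr v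
  obtain ⟨b, a₁, a₂, hb, hne, hba₁, hba₂, ha₁, ha₂⟩ :=
    exists_heightVx_two_adj_two_heightVx_one htree hbal hleaf hle hc hdeg
  have hA : {a₁, a₂} ⊆ G.neighborSet b :=
    Set.insert_subset hba₁ (Set.singleton_subset_iff.mpr hba₂)
  have hb_mem : b ∈ nbhd G {a₁, a₂} := ⟨a₁, Set.mem_insert _ _, hba₁.symm⟩
  refine not_tdUnmixed_of_leaf_swap (isTDSet_heightVx_le_one_or_two_notMem_nbhd htree hbal
    hleaf hle hA (by simp [ha₁, ha₂])) (by simp [hb, hb_mem]) hne hba₁ hba₂ ?_ hunm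
  rintro s (hs | ⟨-, hs⟩) hsa
  · refine (heightVx_eq_zero_iff htree.connected hleaf).mp ?_
    rcases hsa with h | h <;>
      have := hbal.heightVx_eq_add_one_or htree.connected hleaf h <;> omega
  · rcases hsa with h | h
    exacts [absurd ⟨a₁, by simp, h.symm⟩ hs, absurd ⟨a₂, by simp, h.symm⟩ hs]
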